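/- arXiv:1802.08700 — 5 statements merged into one kernel-verified Lean document; each statement's English description precedes it below -/
import Mathlib

section
/- For all natural numbers x₁ ≥ 1 and x₂, …, xₙ, the Sprague–Grundy value of the Auxiliary Nim game is strictly increasing in the auxiliary pile: N(x₁, x₂, …, xₙ) > N(x₁ − 1, x₂, …, xₙ). -/
lemma sum_update_lt {n : ℕ} (x : Fin n → ℕ) (i : Fin n) (v : ℕ) (h : v < x i) :
    (∑ j, Function.update x i v j) < ∑ j, x j := by
  apply Finset.sum_lt_sum
  · intro j _
    rcases eq_or_ne j i with rfl | hj
    · simpa using h.le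
    · simp [Function.update_of_ne hj]
  · exact ⟨i, Finset.mem_univ i, by simpa using h⟩

/-- Sprague–Grundy value of the Auxiliary Nim game
`(*a) ⊞ ((*x 0) ⊕ ⋯ ⊕ (*x (n-1)))`, where `x : Fin n → ℕ` lists the piles
`x₂, …, xₙ` and `a` is the auxiliary pile `x₁`.  It is the mex of the
Sprague–Grundy values of the one-move successors: strictly decrease `a`,
or strictly decrease exactly one of the piles `x i`, or do both. -/
noncomputable def NAux {n : ℕ} (a : ℕ) (x : Fin n → ℕ) : ℕ :=
  sInf {m : ℕ |
    (∀ a', a' < a → NAux a' x ≠ m) ∧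
    (∀ (i : Fin n) (v : ℕ), v < x i → NAux a (Function.update x i v) ≠ m) ∧
    (∀ a', a' < a → ∀ (i : Fin n) (v : ℕ), v < x i →
      NAux a' (Function.update x i v) ≠ m)}
termination_by a + ∑ j, x j
decreasing_by
  · exact Nat.add_lt_add_right ‹_› _
  · exact Nat.add_lt_add_left (sum_update_lt x i v ‹_›) a
  · exact Nat.add_lt_add ‹_› (sum_update_lt x i v ‹_›)

/-! For `a' < a`, every option of `(a', x)` is also an option of `(a, x)` (a move of the
piles `x` made from `(a', x)` becomes a joint move from `(a, x)`), and `(a', x)` is itself an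
option of `(a, x)`.
The mex of a larger set that contains the smaller mex is strictly larger. -/

theorem Nat.sInf_compl_lt_sInf_compl {S T : Set ℕ} (hST : S ⊆ T) (hS : sInf Sᶜ ∈ T)
    (hT : Tᶜ.Nonempty) : sInf Sᶜ < sInf Tᶜ := by
  have hmexT : sInf Tᶜ ∈ Tᶜ := Nat.sInf_mem hT
  refine lt_of_le_of_ne (Nat.sInf_le (Set.compl_subset_compl.2 hST hmexT)) ?_
  exact fun heq => hmexT (heq ▸ hS)

def NAux.optionValues {n : ℕ} (a : ℕ) (x : Fin n → ℕ) : Set ℕ :=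
  {m | (∃ a' < a, NAux a' x = m) ∨
    (∃ (i : Fin n) (v : ℕ), v < x i ∧ NAux a (Function.update x i v) = m) ∨
    (∃ a' < a, ∃ (i : Fin n) (v : ℕ), v < x i ∧ NAux a' (Function.update x i v) = m)}

namespace NAux

variable {n : ℕ}

theorem optionValues_mono (x : Fin n → ℕ) : Monotone fun a => optionValues a x := by
  intro a b hab m hm
  rcases hab.eq_or_lt with rfl | hab
  · exact hm
  rcases hm with ⟨a', ha', rfl⟩ | ⟨i, v, hv, rfl⟩ | ⟨a', ha', i, v, hv, rfl⟩
  · exact Or.inl ⟨a', ha'.trans hab, rfl⟩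
  · exact Or.inr (Or.inr ⟨a, hab, i, v, hv, rfl⟩)
  · exact Or.inr (Or.inr ⟨a', ha'.trans hab, i, v, hv, rfl⟩)

theorem eq_sInf_compl_optionValues (a : ℕ) (x : Fin n → ℕ) :
    NAux a x = sInf (optionValues a x)ᶜ := by
  rw [NAux]
  congr 1
  ext m
  simp only [optionValues, Set.mem_ofPred_eq, Set.mem_compl_iff, not_or, not_exists, not_and]

theorem lt_add_sum_of_mem_optionValues {a m : ℕ} {x : Fin n → ℕ}
    (hle : ∀ a' (x' : Fin n → ℕ), a' + ∑ j, x' j < a + ∑ j, x j → NAux a' x' ≤ a' + ∑ j, x' j)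
    (hm : m ∈ optionValues a x) : m < a + ∑ j, x j := by
  rcases hm with ⟨a', ha', rfl⟩ | ⟨i, v, hv, rfl⟩ | ⟨a', ha', i, v, hv, rfl⟩
  · exact (hle a' x (by omega)).trans_lt (by omega)
  · have := sum_update_lt x i v hv
    exact (hle a _ (by omega)).trans_lt (by omega)
  · have := sum_update_lt x i v hv
    exact (hle a' _ (by omega)).trans_lt (by omega)

theorem le_add_sum (a : ℕ) (x : Fin n → ℕ) : NAux a x ≤ a + ∑ j, x j := by
  rw [eq_sInf_compl_optionValues]
  exact Nat.sInf_le fun hm =>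
    (lt_add_sum_of_mem_optionValues (fun a' x' _ => le_add_sum a' x') hm).false
termination_by a + ∑ j, x j

-- Needed because `sInf ∅ = 0` in `ℕ`: the mex must be realised by a value outside the set.
theorem optionValues_compl_nonempty (a : ℕ) (x : Fin n → ℕ) : (optionValues a x)ᶜ.Nonempty :=
  ⟨a + ∑ j, x j, fun hm =>
    (lt_add_sum_of_mem_optionValues (fun a' x' _ => le_add_sum a' x') hm).false⟩

theorem strictMono_left (x : Fin n → ℕ) : StrictMono fun a => NAux a x := by
  intro a' a h
  have hmem : NAux a' x ∈ optionValues a x := Or.inl ⟨a', h, rfl⟩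
  simp only [eq_sInf_compl_optionValues a' x, eq_sInf_compl_optionValues a x] at hmem ⊢
  exact Nat.sInf_compl_lt_sInf_compl (optionValues_mono x h.le) hmem
    (optionValues_compl_nonempty a x)

end NAux

theorem auxNim_strictMono_general {n : ℕ} (x₁ : ℕ) (hx₁ : 1 ≤ x₁)
    (x : Fin n → ℕ) : NAux (x₁ - 1) x < NAux x₁ x :=
  NAux.strictMono_left x (by omega)

/-- The Sprague–Grundy value of Auxiliary Nim is strictly increasing in the
auxiliary pile: for `x₁ ≥ 1`, `N(x₁, x₂, …, xₙ) > N(x₁ - 1, x₂, …, xₙ)`. -/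
theorem auxNim_strictMono {n : ℕ} (hn : 1 ≤ n) (x₁ : ℕ) (hx₁ : 1 ≤ x₁)
    (x : Fin n → ℕ) : NAux (x₁ - 1) x < NAux x₁ x :=
  auxNim_strictMono_general x₁ hx₁ x
end

section
/- For all natural numbers a₀, b, c: if N(a₀, b, c) = a₀ + b + c, then for every a ≥ a₀ one has N(a, b, c) = a + b + c. -/
/-- Sprague–Grundy value of the Auxiliary Nim game `(*a) ⊞ ((*b) ⊕ (*c))`:
the mex of the Sprague–Grundy values of the one-move successors, which are
`(a',b,c)` with `a' < a`, `(a,b',c)` with `b' < b`, `(a,b,c')` with `c' < c`,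
`(a',b',c)` with `a' < a, b' < b`, and `(a',b,c')` with `a' < a, c' < c`. -/
noncomputable def N3 (a b c : ℕ) : ℕ :=
  sInf {m : ℕ |
    (∀ a', a' < a → N3 a' b c ≠ m) ∧
    (∀ b', b' < b → N3 a b' c ≠ m) ∧
    (∀ c', c' < c → N3 a b c' ≠ m) ∧
    (∀ a', a' < a → ∀ b', b' < b → N3 a' b' c ≠ m) ∧
    (∀ a', a' < a → ∀ c', c' < c → N3 a' b c' ≠ m)}
termination_by a + b + c
decreasing_by all_goals omega

theorem N3_le (a b c : ℕ) : N3 a b c ≤ a + b + c := by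
  rw [N3]
  apply Nat.sInf_le
  simp only [Set.mem_setOf_eq]
  refine ⟨?_, ?_, ?_, ?_, ?_⟩
  · intro a' h; have := N3_le a' b c; omega
  · intro b' h; have := N3_le a b' c; omega
  · intro c' h; have := N3_le a b c'; omega
  · intro a' h a'' h'; have := N3_le a' a'' c; omega
  · intro a' h c' h'; have := N3_le a' b c'; omega
termination_by a + b + c
decreasing_by all_goals omega

theorem N3_succ (a b c : ℕ) (h : N3 a b c = a + b + c) :
    N3 (a + 1) b c = (a + 1) + b + c := by
  rw [N3]
  set T : Set ℕ := {m : ℕ |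
    (∀ a', a' < a + 1 → N3 a' b c ≠ m) ∧
    (∀ b', b' < b → N3 (a + 1) b' c ≠ m) ∧
    (∀ c', c' < c → N3 (a + 1) b c' ≠ m) ∧
    (∀ a', a' < a + 1 → ∀ b', b' < b → N3 a' b' c ≠ m) ∧
    (∀ a', a' < a + 1 → ∀ c', c' < c → N3 a' b c' ≠ m)} with hT
  have hmem : (a + 1) + b + c ∈ T := by
    rw [hT]
    simp only [Set.mem_setOf_eq]
    refine ⟨?_, ?_, ?_, ?_, ?_⟩
    · intro a' h'; have := N3_le a' b c; omega
    · intro b' h'; have := N3_le (a + 1) b' c; omega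
    · intro c' h'; have := N3_le (a + 1) b c'; omega
    · intro a' h' b' h''; have := N3_le a' b' c; omega
    · intro a' h' c' h''; have := N3_le a' b c'; omega
  have hlt : ∀ m, m < (a + 1) + b + c → m ∉ T := by
    intro m hm hmT
    rw [hT] at hmT
    obtain ⟨h1, h2, h3, h4, h5⟩ := hmT
    rcases eq_or_lt_of_le (by omega : m ≤ a + b + c) with heq | hlt'
    · exact h1 a (by omega) (by omega)
    · -- m < N3 a b c = sInf of the set for (a,b,c), so m is not in that set
      have hns : m ∉ {m : ℕ |
          (∀ a', a' < a → N3 a' b c ≠ m) ∧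
          (∀ b', b' < b → N3 a b' c ≠ m) ∧
          (∀ c', c' < c → N3 a b c' ≠ m) ∧
          (∀ a', a' < a → ∀ b', b' < b → N3 a' b' c ≠ m) ∧
          (∀ a', a' < a → ∀ c', c' < c → N3 a' b c' ≠ m)} := by
        apply Nat.notMem_of_lt_sInf
        rw [← N3]
        omega
      simp only [Set.mem_setOf_eq, not_and_or] at hns
      push_neg at hns
      rcases hns with ⟨a', ha', hv⟩ | ⟨b', hb', hv⟩ | ⟨c', hc', hv⟩ |
        ⟨a', ha', b', hb', hv⟩ | ⟨a', ha', c', hc', hv⟩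
      · exact h1 a' (by omega) hv
      · exact h4 a (by omega) b' hb' hv
      · exact h5 a (by omega) c' hc' hv
      · exact h4 a' (by omega) b' hb' hv
      · exact h5 a' (by omega) c' hc' hv
  have hne : T.Nonempty := ⟨_, hmem⟩
  have h1 := Nat.sInf_le hmem
  have h2 := Nat.sInf_mem hne
  by_contra hne'
  exact hlt _ (by omega) h2

/-- If `N(a₀,b,c) = a₀ + b + c` then `N(a,b,c) = a + b + c` for all `a ≥ a₀`. -/
theorem N3_eq_sum_of_ge (a₀ b c : ℕ) (h : N3 a₀ b c = a₀ + b + c) :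
    ∀ a : ℕ, a₀ ≤ a → N3 a b c = a + b + c := by
  intro a ha
  induction a, ha using Nat.le_induction with
  | base => exact h
  | succ n hn ih => exact N3_succ n b c ih
end

section
/- For all natural numbers b, c, m: if m is not a gap in b ⊕ c, then the position (0, b, c) has a one-move successor with Sprague–Grundy value m; equivalently, there exists b' < b with b' ⊕ c = m or there exists c' < c with b ⊕ c' = m. -/
/-- `m` is a gap in `b ⊕ c`: either `m = b ^^^ c`, or, at the largest bit
index `i` where `m` and `b ^^^ c` differ, `m` has bit `1` while `b` and `c`
both have bit `0`. -/
def IsGap (b c m : ℕ) : Prop :=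
  m = b ^^^ c ∨
  ∃ i : ℕ, (∀ j, i < j → m.testBit j = (b ^^^ c).testBit j) ∧
    m.testBit i ≠ (b ^^^ c).testBit i ∧
    m.testBit i = true ∧ b.testBit i = false ∧ c.testBit i = false

theorem Nat.exists_highest_testBit_ne {m n : ℕ} (h : m ≠ n) :
    ∃ i, (∀ j, i < j → m.testBit j = n.testBit j) ∧ m.testBit i ≠ n.testBit i := by
  obtain ⟨i, hi, hup⟩ := Nat.exists_most_significant_bit (Nat.xor_ne_zero_iff.2 h)
  refine ⟨i, fun j hj => ?_, ?_⟩
  · simpa [Nat.testBit_xor] using hup j hj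
  · simpa [Nat.testBit_xor] using hi

theorem Nat.xor_lt_of_highest_testBit_ne {b c m i : ℕ}
    (hup : ∀ j, i < j → m.testBit j = (b ^^^ c).testBit j)
    (hi : m.testBit i ≠ (b ^^^ c).testBit i) (hb : b.testBit i = true) :
    m ^^^ c < b := by
  refine Nat.lt_of_testBit i ?_ hb fun j hj => ?_
  · have hmc : m.testBit i = c.testBit i := by simpa [Nat.testBit_xor, hb] using hi
    rw [Nat.testBit_xor, hmc, Bool.xor_self]
  · rw [Nat.testBit_xor, hup j hj, Nat.testBit_xor, Bool.xor_assoc, Bool.xor_self,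
      Bool.xor_false]

theorem N3_zero_eq_xor (b c : ℕ) : N3 0 b c = b ^^^ c := by
  rw [N3]
  refine IsLeast.csInf_eq ⟨⟨by simp, fun b' hb' => ?_, fun c' hc' => ?_, by simp, by simp⟩, ?_⟩
  · rw [N3_zero_eq_xor b' c]
    exact Nat.xor_left_inj.not.2 hb'.ne
  · rw [N3_zero_eq_xor b c']
    exact Nat.xor_right_inj.not.2 hc'.ne
  · rintro k ⟨-, hk_b, hk_c, -, -⟩
    by_contra! hlt
    rcases Nat.lt_xor_cases hlt with hb | hc
    · exact hk_b _ hb (by rw [N3_zero_eq_xor, Nat.xor_xor_cancel_right])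
    · exact hk_c _ hc (by rw [N3_zero_eq_xor, Nat.xor_comm k, Nat.xor_xor_cancel_left])
termination_by b + c
decreasing_by all_goals omega

/-- If `m` is not a gap in `b ⊕ c`, then the position `(0,b,c)` has a one-move
successor with Sprague–Grundy value `m`: there is `b' < b` with
`N(0,b',c) = m` or `c' < c` with `N(0,b,c') = m`. -/
theorem nongap_attainable (b c m : ℕ) (h : ¬ IsGap b c m) :
    (∃ b' < b, N3 0 b' c = m) ∨ (∃ c' < c, N3 0 b c' = m) := by
  simp only [IsGap, not_or, not_exists, not_and] at h
  obtain ⟨hne, hnogap⟩ := h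
  obtain ⟨i, hup, hi⟩ := Nat.exists_highest_testBit_ne hne
  have hbc : b.testBit i = true ∨ c.testBit i = true := by
    cases hm : m.testBit i
    · rw [hm, ne_comm, Bool.ne_false_iff, Nat.testBit_xor] at hi
      cases hb : b.testBit i <;> simp_all
    · by_contra! hbc
      simp only [ne_eq, Bool.not_eq_true] at hbc
      exact hnogap i hup hi hm hbc.1 hbc.2
  rcases hbc with hb | hc
  · exact Or.inl ⟨m ^^^ c, Nat.xor_lt_of_highest_testBit_ne hup hi hb,
      by rw [N3_zero_eq_xor, Nat.xor_xor_cancel_right]⟩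
  · rw [Nat.xor_comm] at hup hi
    exact Or.inr ⟨m ^^^ b, Nat.xor_lt_of_highest_testBit_ne hup hi hc,
      by rw [N3_zero_eq_xor, Nat.xor_comm m, Nat.xor_xor_cancel_left]⟩
end

section
/- Let x₂, …, xₙ be natural numbers, all at least 1. Then A(x₂, …, xₙ) ≥ min over 2 ≤ i ≤ n of A(x₂, …, xᵢ − 1, …, xₙ), where in the i-th term the pile xᵢ is decreased by 1 and all other piles are unchanged. -/
/-- `AAux x` is the least `a` such that `NAux a x = a + ∑ i, x i`. -/
noncomputable def AAux {n : ℕ} (x : Fin n → ℕ) : ℕ :=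
  sInf {a : ℕ | NAux a x = a + ∑ i, x i}

/-!
Each pile move lowers the value bound `N(a, x) ≤ a + Σ x` by the amount removed, and
`a ↦ N(a, x)` is strictly increasing because every successor of `(a, x)` is also a successor
of `(a + 1, x)`. At `a = A(x)` the value `a + Σ x - 1` lies below `N(a, x) = a + Σ x`, so some
successor attains it. A successor lowering `a` would either contradict the minimality of
`A(x)` or have too small a bound, so it is a pile move `xᵢ ↦ xᵢ - 1` with
`N(a, x - eᵢ) = a + Σ (x - eᵢ)`, which gives `A(x - eᵢ) ≤ a`.
-/

open Function Finset

lemma sum_update_add_self {ι M : Type*} [Fintype ι] [DecidableEq ι] [AddCommMonoid M]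
    (x : ι → M) (i : ι) (v : M) : ∑ j, update x i v j + x i = ∑ j, x j + v := by
  rw [sum_update_of_mem (mem_univ i), sdiff_singleton_eq_erase,
    ← add_sum_erase univ x (mem_univ i), add_comm v, add_right_comm, add_comm (x i)]

section

variable {n : ℕ}

def unattainedValues (a : ℕ) (x : Fin n → ℕ) : Set ℕ :=
  {m | (∀ a' < a, NAux a' x ≠ m) ∧
    (∀ (i : Fin n) (v : ℕ), v < x i → NAux a (update x i v) ≠ m) ∧
    (∀ a' < a, ∀ (i : Fin n) (v : ℕ), v < x i → NAux a' (update x i v) ≠ m)}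

lemma NAux_eq_sInf (a : ℕ) (x : Fin n → ℕ) : NAux a x = sInf (unattainedValues a x) := by
  rw [NAux]
  rfl

lemma add_sum_mem_unattainedValues (a : ℕ) (x : Fin n → ℕ) :
    a + ∑ j, x j ∈ unattainedValues a x := by
  have hle (b : ℕ) (y : Fin n → ℕ) (h : b + ∑ j, y j < a + ∑ j, x j) :
      NAux b y ≤ b + ∑ j, y j := by
    rw [NAux_eq_sInf]
    exact Nat.sInf_le (add_sum_mem_unattainedValues b y)
  refine ⟨fun a' ha' h => ?_, fun i v hv h => ?_, fun a' ha' i v hv h => ?_⟩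
  · have := hle a' x (by omega)
    omega
  · have := sum_update_add_self x i v
    have := hle a (update x i v) (by omega)
    omega
  · have := sum_update_add_self x i v
    have := hle a' (update x i v) (by omega)
    omega
termination_by a + ∑ j, x j

lemma NAux_le_add_sum (a : ℕ) (x : Fin n → ℕ) : NAux a x ≤ a + ∑ j, x j := by
  rw [NAux_eq_sInf]
  exact Nat.sInf_le (add_sum_mem_unattainedValues a x)

lemma NAux_mem_unattainedValues (a : ℕ) (x : Fin n → ℕ) :
    NAux a x ∈ unattainedValues a x := by
  rw [NAux_eq_sInf]
  exact Nat.sInf_mem ⟨_, add_sum_mem_unattainedValues a x⟩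

lemma exists_successor_NAux_eq_of_lt {a m : ℕ} {x : Fin n → ℕ} (hm : m < NAux a x) :
    (∃ a' < a, NAux a' x = m) ∨ (∃ i, ∃ v < x i, NAux a (update x i v) = m) ∨
      ∃ a' < a, ∃ i, ∃ v < x i, NAux a' (update x i v) = m := by
  rw [NAux_eq_sInf] at hm
  have := Nat.notMem_of_lt_sInf hm
  simp only [unattainedValues, Set.mem_ofPred_eq, not_and_or, not_forall, not_not] at this
  grind

lemma NAux_lt_NAux_succ (a : ℕ) (x : Fin n → ℕ) : NAux a x < NAux (a + 1) x := by
  obtain ⟨hpred, -, hboth⟩ := NAux_mem_unattainedValues (a + 1) x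
  by_contra! hle
  rcases exists_successor_NAux_eq_of_lt (hle.lt_of_ne' (hpred a a.lt_succ_self)) with
    ⟨a', ha', h⟩ | ⟨i, v, hv, h⟩ | ⟨a', ha', i, v, hv, h⟩
  · exact hpred a' (by omega) h
  · exact hboth a a.lt_succ_self i v hv h
  · exact hboth a' (by omega) i v hv h

lemma strictMono_NAux (x : Fin n → ℕ) : StrictMono fun a => NAux a x :=
  strictMono_nat_of_lt_succ fun a => NAux_lt_NAux_succ a x

lemma le_NAux (a : ℕ) (x : Fin n → ℕ) : a ≤ NAux a x :=
  (strictMono_NAux x).id_le a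

/-- The successors `(a', x - eᵢ)` with `A ≤ a' ≤ b` attain every value in `[b, b + Σ x)`. -/
lemma NAux_eq_add_sum_of_update_pred {x : Fin n → ℕ} {i : Fin n} (hi : x i ≠ 0) {A : ℕ}
    (hA : ∀ b ≥ A, NAux b (update x i (x i - 1)) = b + ∑ j, update x i (x i - 1) j)
    {b : ℕ} (hb : A + ∑ j, x j ≤ b) : NAux b x = b + ∑ j, x j := by
  have hsum := sum_update_add_self x i (x i - 1)
  have hle := NAux_le_add_sum b x
  have hge := le_NAux b x
  obtain ⟨-, hpile, hboth⟩ := NAux_mem_unattainedValues b x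
  by_contra hne
  obtain h | h := eq_or_lt_of_le (show NAux b x + 1 - ∑ j, x j ≤ b by omega)
  · exact hpile i (x i - 1) (by omega) (by rw [hA b (by omega)]; omega)
  · exact hboth _ h i (x i - 1) (by omega) (by rw [hA _ (by omega)]; omega)

lemma exists_forall_NAux_eq_add_sum (x : Fin n → ℕ) :
    ∃ A, ∀ b ≥ A, NAux b x = b + ∑ j, x j := by
  by_cases hzero : ∀ i, x i = 0
  · refine ⟨0, fun b _ => le_antisymm (NAux_le_add_sum b x) ?_⟩
    simpa [hzero] using le_NAux b x
  · push Not at hzero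
    obtain ⟨i, hi⟩ := hzero
    obtain ⟨A, hA⟩ := exists_forall_NAux_eq_add_sum (update x i (x i - 1))
    exact ⟨A + ∑ j, x j, fun b hb => NAux_eq_add_sum_of_update_pred hi hA hb⟩
termination_by ∑ j, x j
decreasing_by exact sum_update_lt x i _ (by omega)

lemma NAux_AAux (x : Fin n → ℕ) : NAux (AAux x) x = AAux x + ∑ j, x j := by
  obtain ⟨A, hA⟩ := exists_forall_NAux_eq_add_sum x
  exact Nat.sInf_mem (s := {a | NAux a x = a + ∑ j, x j}) ⟨A, hA A le_rfl⟩

lemma AAux_le {a : ℕ} {x : Fin n → ℕ} (h : NAux a x = a + ∑ j, x j) : AAux x ≤ a :=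
  Nat.sInf_le h

lemma exists_AAux_update_pred_le {x : Fin n → ℕ} (hS : 0 < ∑ j, x j) :
    ∃ i, AAux (update x i (x i - 1)) ≤ AAux x := by
  set a := AAux x
  have ha : NAux a x = a + ∑ j, x j := NAux_AAux x
  rcases exists_successor_NAux_eq_of_lt (show a + ∑ j, x j - 1 < NAux a x by omega) with
    ⟨a', ha', h⟩ | ⟨i, v, hv, h⟩ | ⟨a', ha', i, v, hv, h⟩
  · have := NAux_le_add_sum a' x
    have := AAux_le (a := a') (x := x) (by omega)
    omega
  · have := NAux_le_add_sum a (update x i v)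
    have := sum_update_add_self x i v
    obtain rfl : v = x i - 1 := by omega
    exact ⟨i, AAux_le (by omega)⟩
  · have := NAux_le_add_sum a' (update x i v)
    have := sum_update_add_self x i v
    omega

end

theorem AAux_recursive_lower_bound_general {n : ℕ} (hn : 0 < n) (x : Fin n → ℕ) :
    (Finset.univ.inf' ⟨⟨0, hn⟩, Finset.mem_univ _⟩
      fun i => AAux (Function.update x i (x i - 1))) ≤ AAux x := by
  rcases Nat.eq_zero_or_pos (∑ j, x j) with hS | hS
  · have hzero : ∀ j, x j = 0 := by simpa using hS
    exact inf'_le_of_le _ (mem_univ ⟨0, hn⟩) (by rw [update_eq_self_iff.mpr (by simp [hzero])])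
  · obtain ⟨i, hi⟩ := exists_AAux_update_pred_le hS
    exact inf'_le_of_le _ (mem_univ i) hi

/-- If all piles are at least `1`, then `A(x₂, …, xₙ)` is at least the minimum
over `i` of `A(x₂, …, xᵢ - 1, …, xₙ)`. -/
theorem AAux_recursive_lower_bound {n : ℕ} (hn : 0 < n) (x : Fin n → ℕ)
    (hx : ∀ i, 1 ≤ x i) :
    (Finset.univ.inf' ⟨⟨0, hn⟩, Finset.mem_univ _⟩
      fun i => AAux (Function.update x i (x i - 1))) ≤ AAux x :=
  AAux_recursive_lower_bound_general hn x
end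

section
/- Let S be a finite nonempty set of positive integers and let k be a natural number. Then the function n ↦ h(n, k) is eventually periodic: there exist p ≥ 1 and n₀ ∈ ℕ such that h(n + p, k) = h(n, k) for all n ≥ n₀. -/
noncomputable def subCompoundGrundy (S : Finset ℕ) (hS : ∀ s ∈ S, 0 < s) :
    ℕ → ℕ → ℕ := fun n k =>
  sInf {m : ℕ |
    (∀ s ∈ S, s ≤ n → subCompoundGrundy S hS (n - s) k ≠ m) ∧
    (∀ k', k' < k → subCompoundGrundy S hS n k' ≠ m) ∧
    (∀ s ∈ S, s ≤ n → ∀ k', k' < k → subCompoundGrundy S hS (n - s) k' ≠ m)}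
termination_by n k => n + k
decreasing_by
  · have := hS _ ‹_ ∈ S›; omega
  · omega
  · have := hS _ ‹_ ∈ S›; omega

theorem scg_def (S : Finset ℕ) (hS : ∀ s ∈ S, 0 < s) (n k : ℕ) :
    subCompoundGrundy S hS n k = sInf {m : ℕ |
      (∀ s ∈ S, s ≤ n → subCompoundGrundy S hS (n - s) k ≠ m) ∧
      (∀ k', k' < k → subCompoundGrundy S hS n k' ≠ m) ∧
      (∀ s ∈ S, s ≤ n → ∀ k', k' < k → subCompoundGrundy S hS (n - s) k' ≠ m)} := by
  rw [subCompoundGrundy]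

theorem scg_le (S : Finset ℕ) (hS : ∀ s ∈ S, 0 < s) (n k : ℕ) :
    subCompoundGrundy S hS n k ≤ S.card * (k + 1) + k := by
  set N := S.card * (k + 1) + k with hN
  set T : Finset ℕ := ((S.image fun s => subCompoundGrundy S hS (n - s) k)
    ∪ (Finset.range k).image (fun k' => subCompoundGrundy S hS n k'))
    ∪ (S ×ˢ Finset.range k).image (fun x => subCompoundGrundy S hS (n - x.1) x.2) with hT
  have hcard : T.card ≤ N := by
    have h1 := Finset.card_union_le ((S.image fun s => subCompoundGrundy S hS (n - s) k)
      ∪ (Finset.range k).image (fun k' => subCompoundGrundy S hS n k'))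
      ((S ×ˢ Finset.range k).image (fun x => subCompoundGrundy S hS (n - x.1) x.2))
    have h2 := Finset.card_union_le (S.image fun s => subCompoundGrundy S hS (n - s) k)
      ((Finset.range k).image (fun k' => subCompoundGrundy S hS n k'))
    have h3 := Finset.card_image_le (s := S) (f := fun s => subCompoundGrundy S hS (n - s) k)
    have h4 := Finset.card_image_le (s := Finset.range k)
      (f := fun k' => subCompoundGrundy S hS n k')
    have h5 := Finset.card_image_le (s := S ×ˢ Finset.range k)
      (f := fun x => subCompoundGrundy S hS (n - x.1) x.2)
    have h6 : (S ×ˢ Finset.range k).card = S.card * k := by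
      simp [Finset.card_product]
    have h7 : (Finset.range k).card = k := Finset.card_range k
    have : N = S.card + k + S.card * k := by rw [hN]; ring
    rw [hT]
    omega
  have hex : ∃ m, m ∈ Finset.range (N + 1) ∧ m ∉ T := by
    by_contra h
    push_neg at h
    have hsub : Finset.range (N + 1) ⊆ T := fun m hm => h m hm
    have := Finset.card_le_card hsub
    rw [Finset.card_range] at this
    omega
  obtain ⟨m, hm1, hm2⟩ := hex
  have hmem : m ∈ {m : ℕ |
      (∀ s ∈ S, s ≤ n → subCompoundGrundy S hS (n - s) k ≠ m) ∧
      (∀ k', k' < k → subCompoundGrundy S hS n k' ≠ m) ∧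
      (∀ s ∈ S, s ≤ n → ∀ k', k' < k → subCompoundGrundy S hS (n - s) k' ≠ m)} := by
    refine ⟨fun s hs _ heq => hm2 ?_, fun k' hk' heq => hm2 ?_,
      fun s hs _ k' hk' heq => hm2 ?_⟩
    · exact Finset.mem_union_left _ (Finset.mem_union_left _
        (Finset.mem_image.mpr ⟨s, hs, heq⟩))
    · exact Finset.mem_union_left _ (Finset.mem_union_right _
        (Finset.mem_image.mpr ⟨k', Finset.mem_range.mpr hk', heq⟩))
    · exact Finset.mem_union_right _
        (Finset.mem_image.mpr ⟨(s, k'), by simp [hs, hk'], heq⟩)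
  rw [scg_def]
  exact le_trans (Nat.sInf_le hmem) (by simpa using Nat.lt_succ_iff.mp (Finset.mem_range.mp hm1))

theorem scg_congr (S : Finset ℕ) (hS : ∀ s ∈ S, 0 < s) {M a b K : ℕ}
    (hM : ∀ s ∈ S, s ≤ M) (ha : M ≤ a) (hb : M ≤ b)
    (h1 : ∀ s ∈ S, subCompoundGrundy S hS (a - s) K = subCompoundGrundy S hS (b - s) K)
    (h2 : ∀ k' < K, subCompoundGrundy S hS a k' = subCompoundGrundy S hS b k')
    (h3 : ∀ s ∈ S, ∀ k' < K,
      subCompoundGrundy S hS (a - s) k' = subCompoundGrundy S hS (b - s) k') :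
    subCompoundGrundy S hS a K = subCompoundGrundy S hS b K := by
  rw [scg_def S hS a K, scg_def S hS b K]
  congr 1
  ext m
  simp only [Set.mem_setOf_eq]
  constructor
  · rintro ⟨c1, c2, c3⟩
    refine ⟨fun s hs _ => ?_, fun k' hk' => ?_, fun s hs _ k' hk' => ?_⟩
    · rw [← h1 s hs]; exact c1 s hs (le_trans (hM s hs) ha)
    · rw [← h2 k' hk']; exact c2 k' hk'
    · rw [← h3 s hs k' hk']; exact c3 s hs (le_trans (hM s hs) ha) k' hk'
  · rintro ⟨c1, c2, c3⟩
    refine ⟨fun s hs _ => ?_, fun k' hk' => ?_, fun s hs _ k' hk' => ?_⟩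
    · rw [h1 s hs]; exact c1 s hs (le_trans (hM s hs) hb)
    · rw [h2 k' hk']; exact c2 k' hk'
    · rw [h3 s hs k' hk']; exact c3 s hs (le_trans (hM s hs) hb) k' hk'

theorem iter_periodic {f : ℕ → ℕ} {p n₀ : ℕ} (h : ∀ n, n₀ ≤ n → f (n + p) = f n) :
    ∀ t, ∀ n, n₀ ≤ n → f (n + t * p) = f n := by
  intro t
  induction t with
  | zero => simp
  | succ t ih =>
    intro n hn
    have : n + (t + 1) * p = (n + t * p) + p := by ring
    rw [this, h _ (by omega), ih n hn]

theorem scg_step (S : Finset ℕ) (hSne : S.Nonempty) (hS : ∀ s ∈ S, 0 < s)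
    (K p n₀ : ℕ) (hp : 1 ≤ p)
    (hlow : ∀ k' < K, ∀ n, n₀ ≤ n →
      subCompoundGrundy S hS (n + p) k' = subCompoundGrundy S hS n k') :
    ∃ q, 1 ≤ q ∧ p ∣ q ∧ ∃ n₁, n₀ ≤ n₁ ∧ ∀ n, n₁ ≤ n →
      subCompoundGrundy S hS (n + q) K = subCompoundGrundy S hS n K := by
  set M := S.max' hSne with hMdef
  have hM : ∀ s ∈ S, s ≤ M := fun s hs => S.le_max' s hs
  have hMpos : 1 ≤ M := (hS _ (S.max'_mem hSne)).trans_le (le_refl M)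
  set B := S.card * (K + 1) + K with hB
  set a := n₀ + M with hadef
  have hGlt : ∀ j (i : Fin M), subCompoundGrundy S hS (a + j * p + i) K < B + 1 :=
    fun j i => Nat.lt_succ_of_le (scg_le S hS _ _)
  set G : ℕ → (Fin M → Fin (B + 1)) :=
    fun j i => ⟨subCompoundGrundy S hS (a + j * p + i) K, hGlt j i⟩ with hG
  obtain ⟨x, y, hxy, hGxy⟩ := Finite.exists_ne_map_eq_of_infinite G
  wlog hlt : x < y generalizing x y
  · exact this y x hxy.symm hGxy.symm (by omega)
  set n := a + x * p with hn
  set q := (y - x) * p with hq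
  have hq1 : 1 ≤ q := by
    have : 1 ≤ y - x := by omega
    calc 1 = 1 * 1 := by ring
    _ ≤ (y - x) * p := Nat.mul_le_mul this hp
  have hwin : ∀ i, i < M → subCompoundGrundy S hS (n + i + q) K
      = subCompoundGrundy S hS (n + i) K := by
    intro i hi
    have := congrFun hGxy ⟨i, hi⟩
    rw [hG] at this
    have heq := congrArg Fin.val this
    simp only at heq
    have harith : n + i + q = a + y * p + i := by
      rw [hn, hq]
      have : y * p = x * p + (y - x) * p := by
        rw [← Nat.add_mul]; congr 1; omega
      omega
    have harith2 : n + i = a + x * p + i := by rw [hn]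
    rw [harith, harith2]
    exact heq.symm
  refine ⟨q, hq1, ⟨y - x, by rw [hq]; ring⟩, n, by omega, ?_⟩
  intro m hm
  induction m using Nat.strong_induction_on with
  | _ m ih =>
    by_cases hcase : m < n + M
    · have : m = n + (m - n) := by omega
      rw [this]
      exact hwin (m - n) (by omega)
    · -- m ≥ n + M
      have hMm : M ≤ m := by omega
      have hMmq : M ≤ m + q := by omega
      apply scg_congr S hS hM hMmq hMm
      · intro s hs
        have hsM := hM s hs
        have hspos := hS s hs
        have h1 : m + q - s = (m - s) + q := by omega
        rw [h1]
        exact ih (m - s) (by omega) (by omega)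
      · intro k' hk'
        have := iter_periodic (f := fun n => subCompoundGrundy S hS n k') (n₀ := n₀)
          (hlow k' hk') (y - x) m (by rw [hn, hadef] at hm; omega)
        rwa [← hq] at this
      · intro s hs k' hk'
        have hsM := hM s hs
        have h1 : m + q - s = (m - s) + q := by omega
        rw [h1]
        have := iter_periodic (f := fun n => subCompoundGrundy S hS n k') (n₀ := n₀)
          (hlow k' hk') (y - x) (m - s) (by rw [hn, hadef] at hm; omega)
        rwa [← hq] at this

theorem scg_all_levels (S : Finset ℕ) (hSne : S.Nonempty) (hS : ∀ s ∈ S, 0 < s) (k : ℕ) :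
    ∃ p, 1 ≤ p ∧ ∃ n₀, ∀ k' ≤ k, ∀ n, n₀ ≤ n →
      subCompoundGrundy S hS (n + p) k' = subCompoundGrundy S hS n k' := by
  induction k with
  | zero =>
    obtain ⟨q, hq1, -, n₁, -, hper⟩ := scg_step S hSne hS 0 1 0 le_rfl
      (by intro k' hk'; omega)
    exact ⟨q, hq1, n₁, fun k' hk' n hn => by
      interval_cases k'
      exact hper n hn⟩
  | succ k ih =>
    obtain ⟨p, hp1, n₀, hper⟩ := ih
    obtain ⟨q, hq1, ⟨t, ht⟩, n₁, hn₁, hperK⟩ := scg_step S hSne hS (k + 1) p n₀ hp1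
      (fun k' hk' n hn => hper k' (by omega) n hn)
    refine ⟨q, hq1, n₁, fun k' hk' n hn => ?_⟩
    rcases Nat.lt_succ_iff_lt_or_eq.mp (Nat.lt_succ_of_le hk') with h | h
    · rcases Nat.lt_succ_iff.mp h with h'
      rw [ht, Nat.mul_comm]
      exact iter_periodic (f := fun n => subCompoundGrundy S hS n k') (n₀ := n₀)
        (hper k' h') t n (by omega)
    · subst h
      exact hperK n hn

/-- For a finite nonempty set `S` of positive integers and any Nim heap `*k`,
the Sprague–Grundy function `n ↦ h(n,k)` of the selective compound `Gₙ ⊞ (*k)`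
is eventually periodic. -/
theorem subCompound_periodic (S : Finset ℕ) (hSne : S.Nonempty)
    (hS : ∀ s ∈ S, 0 < s) (k : ℕ) :
    ∃ p : ℕ, 1 ≤ p ∧ ∃ n₀ : ℕ, ∀ n : ℕ, n₀ ≤ n →
      subCompoundGrundy S hS (n + p) k = subCompoundGrundy S hS n k := by
  obtain ⟨p, hp1, n₀, h⟩ := scg_all_levels S hSne hS k
  exact ⟨p, hp1, n₀, h k le_rfl⟩
end
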